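/- arXiv:math/0304063 — 3 statements merged into one kernel-verified Lean document; each statement's English description precedes it below -/
import Mathlib

section
/- Let A be a unital complex C*-algebra and let v₁, v₂ ∈ A be isometries, i.e. v₁*·v₁ = 1 and v₂*·v₂ = 1. Then the matrix w = [[1 − v₁v₁*, v₁v₂*],[v₂v₁*, 1 − v₂v₂*]] ∈ M₂(A) is a self-adjoint unitary (w* = w and w² = 1), and for every x ∈ A one has w · [[v₁ x v₁*, 0],[0, 0]] · w = [[0, 0],[0, v₂ x v₂*]]. -/
/-!
Writing `u = [[v₁, 0], [-v₂, 0]]`, the matrix `w` is the reflection `1 - u u*`. Since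
`u* u = diag(v₁* v₁ + v₂* v₂, 0) = diag(2, 0)`, we get `u u* u = 2 u`, which makes `w` an
involution. Moreover `w` carries `diag(v₁, 0)` to `[[0, 0], [v₂, 0]]`, so conjugating
`diag(v₁, 0) · diag(x, 0) · diag(v₁, 0)*` by the self-adjoint `w` gives
`[[0, 0], [v₂, 0]] · diag(x, 0) · [[0, 0], [v₂, 0]]* = diag(0, v₂ x v₂*)`.
-/

section StarRing

variable {R : Type*} [Ring R] [StarRing R]

theorem isSelfAdjoint_one_sub_mul_star (u : R) : IsSelfAdjoint (1 - u * star u) :=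
  (IsSelfAdjoint.one R).sub (IsSelfAdjoint.mul_star_self u)

theorem one_sub_mul_star_mul_self {u : R} (h : u * star u * u = 2 * u) :
    (1 - u * star u) * (1 - u * star u) = 1 := by
  have h' : u * star u * (u * star u) = 2 * (u * star u) := by
    rw [← mul_assoc, h, mul_assoc]
  noncomm_ring [h']

theorem IsSelfAdjoint.mul_mul_mul_star_mul {w : R} (hw : IsSelfAdjoint w) (a x : R) :
    w * (a * x * star a) * w = w * a * x * star (w * a) := by
  rw [star_mul, hw.star_eq]
  noncomm_ring

end StarRing

namespace Matrix

variable {A : Type*} [Ring A] [StarRing A]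

theorem star_fin_two (a b c d : A) :
    star !![a, b; c, d] = !![star a, star c; star b, star d] := by
  ext i j
  fin_cases i <;> fin_cases j <;> rfl

/-- The unitary `w` of the statement, exchanging the corners `v₁ (·) v₁*` and `v₂ (·) v₂*`. -/
def swapReflection (v₁ v₂ : A) : Matrix (Fin 2) (Fin 2) A :=
  !![1 - v₁ * star v₁, v₁ * star v₂; v₂ * star v₁, 1 - v₂ * star v₂]

theorem swapReflection_eq_one_sub_mul_star (v₁ v₂ : A) :
    swapReflection v₁ v₂ = 1 - !![v₁, 0; -v₂, 0] * star !![v₁, 0; -v₂, 0] := by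
  simp [swapReflection, star_fin_two, one_fin_two]

theorem isSelfAdjoint_swapReflection (v₁ v₂ : A) : IsSelfAdjoint (swapReflection v₁ v₂) :=
  swapReflection_eq_one_sub_mul_star v₁ v₂ ▸ isSelfAdjoint_one_sub_mul_star _

theorem swapReflection_mul_self {v₁ v₂ : A} (h₁ : star v₁ * v₁ = 1) (h₂ : star v₂ * v₂ = 1) :
    swapReflection v₁ v₂ * swapReflection v₁ v₂ = 1 := by
  rw [swapReflection_eq_one_sub_mul_star]
  apply one_sub_mul_star_mul_self
  simp [star_fin_two, ofNat_fin_two, mul_assoc, h₁, h₂, two_mul]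

theorem swapReflection_mul_fin_two {v₁ : A} (v₂ : A) (h₁ : star v₁ * v₁ = 1) :
    swapReflection v₁ v₂ * !![v₁, 0; 0, 0] = !![0, 0; v₂, 0] := by
  simp [swapReflection, sub_mul, mul_assoc, h₁]

theorem swapReflection_conj_corner {v₁ : A} (v₂ : A) (h₁ : star v₁ * v₁ = 1) (x : A) :
    swapReflection v₁ v₂ * !![v₁ * x * star v₁, 0; 0, 0] * swapReflection v₁ v₂ =
      !![0, 0; 0, v₂ * x * star v₂] := by
  have hcorner : !![v₁ * x * star v₁, 0; 0, 0] =
      !![v₁, 0; 0, 0] * !![x, 0; 0, 0] * star !![v₁, 0; 0, 0] := by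
    simp [star_fin_two]
  rw [hcorner, (isSelfAdjoint_swapReflection v₁ v₂).mul_mul_mul_star_mul,
    swapReflection_mul_fin_two v₂ h₁, star_fin_two, mul_fin_two, mul_fin_two]
  simp

end Matrix

/-- Let `A` be a unital complex C*-algebra and `v₁, v₂ ∈ A` isometries, i.e. `v₁* v₁ = 1` and
`v₂* v₂ = 1`. Then `w = [[1 − v₁v₁*, v₁v₂*],[v₂v₁*, 1 − v₂v₂*]] ∈ M₂(A)` is a self-adjoint
unitary (`w* = w` and `w² = 1`), and for every `x ∈ A` one has
`w * [[v₁ x v₁*, 0],[0, 0]] * w = [[0, 0],[0, v₂ x v₂*]]`. -/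
theorem stmt_5 {A : Type*} [CStarAlgebra A] (v₁ v₂ : A)
    (h₁ : star v₁ * v₁ = 1) (h₂ : star v₂ * v₂ = 1) :
    star (!![1 - v₁ * star v₁, v₁ * star v₂; v₂ * star v₁, 1 - v₂ * star v₂] :
        Matrix (Fin 2) (Fin 2) A) =
      !![1 - v₁ * star v₁, v₁ * star v₂; v₂ * star v₁, 1 - v₂ * star v₂] ∧
    (!![1 - v₁ * star v₁, v₁ * star v₂; v₂ * star v₁, 1 - v₂ * star v₂] :
        Matrix (Fin 2) (Fin 2) A) *
      !![1 - v₁ * star v₁, v₁ * star v₂; v₂ * star v₁, 1 - v₂ * star v₂] = 1 ∧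
    ∀ x : A,
      !![1 - v₁ * star v₁, v₁ * star v₂; v₂ * star v₁, 1 - v₂ * star v₂] *
          !![v₁ * x * star v₁, 0; 0, 0] *
          !![1 - v₁ * star v₁, v₁ * star v₂; v₂ * star v₁, 1 - v₂ * star v₂] =
        !![0, 0; 0, v₂ * x * star v₂] :=
  ⟨(Matrix.isSelfAdjoint_swapReflection v₁ v₂).star_eq, Matrix.swapReflection_mul_self h₁ h₂,
    Matrix.swapReflection_conj_corner v₂ h₁⟩
end

section
/- Let A and B be complex C*-algebras and let ψ : A → M₂(B) be a star-homomorphism whose (1,1)-component ψ₁₁ : A → B (where ψᵢⱼ(a) is the (i,j)-entry of ψ(a)) is itself multiplicative, i.e. ψ₁₁(ab) = ψ₁₁(a)ψ₁₁(b) for all a, b ∈ A. Then ψ₁₂(a) = 0 and ψ₂₁(a) = 0 for all a ∈ A, and ψ₂₂ : A → B is a star-homomorphism; consequently ψ(a) is the diagonal matrix diag(ψ₁₁(a), ψ₂₂(a)) for every a ∈ A. -/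
/-!
Write `ψ a = [[α a, β a], [γ a, δ a]]`. The `(1,1)`-entry of `ψ (a * b)` is
`α a * α b + β a * γ b`, so multiplicativity of `α` forces `β a * γ b = 0`. Taking `b = a⋆` and
using `γ (a⋆) = (β a)⋆` gives `β a * (β a)⋆ = 0`, hence `β a = 0` by the C⋆-identity; then
`γ a = (β (a⋆))⋆ = 0`, and `ψ` is diagonal, so `δ` inherits multiplicativity and `⋆` from `ψ`.
-/

namespace Matrix

theorem mul_apply_fin_two {R : Type*} [NonUnitalNonAssocSemiring R]
    (M N : Matrix (Fin 2) (Fin 2) R) (i j : Fin 2) :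
    (M * N) i j = M i 0 * N 0 j + M i 1 * N 1 j := by
  rw [mul_apply, Fin.sum_univ_two]

theorem eq_of_offDiag_eq_zero_fin_two {R : Type*} [Zero R] {M : Matrix (Fin 2) (Fin 2) R}
    (h01 : M 0 1 = 0) (h10 : M 1 0 = 0) : M = !![M 0 0, 0; 0, M 1 1] :=
  (eta_fin_two M).trans (by rw [h01, h10])

end Matrix

open Matrix

theorem apply_star_fin_two {F A B : Type*} [Star A] [Star B]
    [FunLike F A (Matrix (Fin 2) (Fin 2) B)] [StarHomClass F A (Matrix (Fin 2) (Fin 2) B)]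
    (ψ : F) (a : A) (i j : Fin 2) : ψ (star a) i j = star (ψ a j i) := by
  rw [map_star, star_apply]

section FinTwoMatrixValued

variable {F A B : Type*} [Mul A] [InvolutiveStar A]
  [NonUnitalNormedRing B] [StarRing B] [CStarRing B]
  [FunLike F A (Matrix (Fin 2) (Fin 2) B)] [MulHomClass F A (Matrix (Fin 2) (Fin 2) B)]
  [StarHomClass F A (Matrix (Fin 2) (Fin 2) B)]

theorem apply_zero_one_eq_zero_of_corner_mul (ψ : F)
    (hmul : ∀ a b : A, ψ (a * b) 0 0 = ψ a 0 0 * ψ b 0 0) (a : A) : ψ a 0 1 = 0 := by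
  have hcorner : ψ a 0 1 * ψ (star a) 1 0 = 0 := by
    simpa only [map_mul, mul_apply_fin_two, add_eq_left] using hmul a (star a)
  rwa [apply_star_fin_two, CStarRing.mul_star_self_eq_zero_iff] at hcorner

theorem apply_one_zero_eq_zero_of_corner_mul (ψ : F)
    (hmul : ∀ a b : A, ψ (a * b) 0 0 = ψ a 0 0 * ψ b 0 0) (a : A) : ψ a 1 0 = 0 := by
  rw [← star_star a, apply_star_fin_two, apply_zero_one_eq_zero_of_corner_mul ψ hmul, star_zero]

end FinTwoMatrixValued

/-- Let `A` and `B` be complex C*-algebras and `ψ : A → M₂(B)` a star-homomorphism whose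
`(1,1)`-component `ψ₁₁ : A → B` is itself multiplicative. Then `ψ₁₂ a = 0` and `ψ₂₁ a = 0`
for all `a ∈ A`, and `ψ₂₂ : A → B` is a star-homomorphism (multiplicative and ∗-preserving);
consequently `ψ a` is the diagonal matrix `diag (ψ₁₁ a, ψ₂₂ a)` for every `a ∈ A`. -/
theorem stmt_8 {A B : Type*} [NonUnitalCStarAlgebra A] [NonUnitalCStarAlgebra B]
    (ψ : A →⋆ₙₐ[ℂ] Matrix (Fin 2) (Fin 2) B)
    (hmul : ∀ a b : A, ψ (a * b) 0 0 = ψ a 0 0 * ψ b 0 0) :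
    (∀ a : A, ψ a 0 1 = 0 ∧ ψ a 1 0 = 0) ∧
    (∀ a b : A, ψ (a * b) 1 1 = ψ a 1 1 * ψ b 1 1) ∧
    (∀ a : A, ψ (star a) 1 1 = star (ψ a 1 1)) ∧
    (∀ a : A, ψ a = !![ψ a 0 0, 0; 0, ψ a 1 1]) := by
  have h01 := apply_zero_one_eq_zero_of_corner_mul ψ hmul
  have h10 := apply_one_zero_eq_zero_of_corner_mul ψ hmul
  refine ⟨fun a => ⟨h01 a, h10 a⟩, fun a b => ?_, fun a => apply_star_fin_two ψ a 1 1,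
    fun a => eq_of_offDiag_eq_zero_fin_two (h01 a) (h10 a)⟩
  rw [map_mul, mul_apply_fin_two, h10, zero_mul, zero_add]
end

section
/- Let A and B be complex C*-algebras, let I ⊆ B be a closed two-sided ideal, and let ψ : A → M₂(B) be a star-homomorphism with components ψᵢⱼ (the (i,j)-entries of ψ). Suppose x ∈ B satisfies x·ψ₁₁(a) ∈ I and ψ₁₁(a)·x ∈ I for all a ∈ A. Then x·ψ₁₂(a) ∈ I and ψ₂₁(a)·x ∈ I for all a ∈ A. -/
/-!
A closed ideal `I` of a C*-algebra is hereditary: if `y y* ∈ I`, put `e = f (y y*)` with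
`f t = t² / (δ² + t²)`. Then `e y = (y y*) g(y y*) y ∈ I` for `g t = t / (δ² + t²)`, and
`‖y - e y‖² = ‖(y y*)(1 - e)²‖ ≤ sup_t |t| (δ² / (δ² + t²))² ≤ δ / 2`, so `y ∈ closure I = I`.

For the star-homomorphism `ψ`, the `(0,0)` entry of `ψ (a a*) = ψ a (ψ a)*` gives
`ψ₀₁(a) ψ₀₁(a)* = ψ₀₀(a a*) - ψ₀₀(a) ψ₀₀(a)*`, hence `(x ψ₀₁(a)) (x ψ₀₁(a))* ∈ I`, and
symmetrically `(ψ₁₀(a) x)* (ψ₁₀(a) x) ∈ I`.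
-/

lemma abs_mul_one_sub_sq_div_add_sq_sq_le {δ : ℝ} (hδ : 0 < δ) (t : ℝ) :
    |t * (1 - t ^ 2 / (δ ^ 2 + t ^ 2)) ^ 2| ≤ δ / 2 := by
  have hpos : 0 < δ ^ 2 + t ^ 2 := by positivity
  have hamgm : 2 * δ * |t| ≤ δ ^ 2 + t ^ 2 := by
    nlinarith [sq_nonneg (δ - |t|), sq_abs t]
  have hcompl : 1 - t ^ 2 / (δ ^ 2 + t ^ 2) = δ ^ 2 / (δ ^ 2 + t ^ 2) := by
    field_simp; ring
  have hle1 : δ ^ 2 / (δ ^ 2 + t ^ 2) ≤ 1 := (div_le_one hpos).2 (by nlinarith)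
  rw [hcompl, abs_mul, abs_of_nonneg (a := (_ / _) ^ 2) (by positivity)]
  calc |t| * (δ ^ 2 / (δ ^ 2 + t ^ 2)) ^ 2 ≤ |t| * (δ ^ 2 / (δ ^ 2 + t ^ 2)) := by
        gcongr; exact pow_le_of_le_one (by positivity) hle1 two_ne_zero
    _ ≤ δ / 2 := by
        rw [mul_div_assoc', div_le_div_iff₀ hpos two_pos]; nlinarith [abs_nonneg t]

section CStarAlgebra

variable {B : Type*} [NonUnitalCStarAlgebra B]

lemma cfcₙ_mul_one_sub_sq {a : B} (ha : IsSelfAdjoint a) {f : ℝ → ℝ} (hf : Continuous f)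
    (hf0 : f 0 = 0) :
    cfcₙ (fun t => t * (1 - f t) ^ 2) a =
      a - a * cfcₙ f a - cfcₙ f a * a + cfcₙ f a * a * cfcₙ f a := by
  have hp : cfcₙ (fun t => t - t * f t) a = a - a * cfcₙ f a := by
    rw [cfcₙ_sub (fun t => t) _ a, cfcₙ_mul (fun t => t) f a, cfcₙ_id' ℝ a]
  have hfun : (fun t : ℝ => t * (1 - f t) ^ 2) =
      fun t => (t - t * f t) - f t * (t - t * f t) := by
    funext t; ring
  rw [hfun, cfcₙ_sub (fun t => t - t * f t) _ a, cfcₙ_mul f (fun t => t - t * f t) a, hp]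
  noncomm_ring

lemma exists_norm_sub_mul_star_self_mul_mul_sq_le (y : B) {δ : ℝ} (hδ : 0 < δ) :
    ∃ w : B, ‖y - y * star y * w * y‖ ^ 2 ≤ δ / 2 := by
  set a := y * star y
  have ha : IsSelfAdjoint a := .mul_star_self y
  set g : ℝ → ℝ := fun t => t / (δ ^ 2 + t ^ 2)
  have hg : Continuous g := continuous_id.div (by fun_prop) fun t => by positivity
  have he : cfcₙ (fun t => t * g t) a = a * cfcₙ g a := by
    rw [cfcₙ_mul (fun t => t) g a, cfcₙ_id' ℝ a]
  have he' : IsSelfAdjoint (cfcₙ (fun t => t * g t) a) := cfcₙ_predicate _ a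
  refine ⟨cfcₙ g a, ?_⟩
  have hsq : (y - a * cfcₙ g a * y) * star (y - a * cfcₙ g a * y) =
      cfcₙ (fun t => t * (1 - t * g t) ^ 2) a := by
    rw [cfcₙ_mul_one_sub_sq ha (by fun_prop) (by simp), ← he]
    simp only [star_sub, star_mul, he'.star_eq, a]
    noncomm_ring
  rw [sq, ← CStarRing.norm_self_mul_star, hsq]
  refine norm_cfcₙ_le fun t _ => ?_
  simpa only [g, Real.norm_eq_abs, mul_div_assoc', ← sq] using
    abs_mul_one_sub_sq_div_add_sq_sq_le hδ t

lemma exists_norm_sub_mul_star_self_mul_mul_lt (y : B) {ε : ℝ} (hε : 0 < ε) :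
    ∃ w : B, ‖y - y * star y * w * y‖ < ε := by
  obtain ⟨w, hw⟩ := exists_norm_sub_mul_star_self_mul_mul_sq_le y (pow_pos hε 2)
  refine ⟨w, (pow_lt_pow_iff_left₀ (norm_nonneg _) hε.le two_ne_zero).1 ?_⟩
  linarith [pow_pos hε 2]

lemma exists_norm_sub_mul_mul_star_self_mul_lt (y : B) {ε : ℝ} (hε : 0 < ε) :
    ∃ w : B, ‖y - y * w * (star y * y)‖ < ε := by
  obtain ⟨w, hw⟩ := exists_norm_sub_mul_star_self_mul_mul_lt (star y) hε
  refine ⟨star w, ?_⟩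
  rw [← norm_star]
  simpa only [star_sub, star_mul, star_star, mul_assoc] using hw

namespace TwoSidedIdeal

variable {I : TwoSidedIdeal B} (hI : IsClosed (I : Set B)) {y : B}
include hI

lemma mem_of_mul_star_self_mem (h : y * star y ∈ I) : y ∈ I := by
  refine hI.closure_subset_iff.2 le_rfl (Metric.mem_closure_iff.2 fun ε hε => ?_)
  obtain ⟨w, hw⟩ := exists_norm_sub_mul_star_self_mul_mul_lt y hε
  exact ⟨_, I.mul_mem_right _ _ (I.mul_mem_right _ _ h), by rwa [dist_eq_norm]⟩

lemma mem_of_star_mul_self_mem (h : star y * y ∈ I) : y ∈ I := by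
  refine hI.closure_subset_iff.2 le_rfl (Metric.mem_closure_iff.2 fun ε hε => ?_)
  obtain ⟨w, hw⟩ := exists_norm_sub_mul_mul_star_self_mul_lt y hε
  exact ⟨_, I.mul_mem_left _ _ h, by rwa [dist_eq_norm]⟩

end TwoSidedIdeal

end CStarAlgebra

lemma Matrix.fin_two_apply_zero_one_mul_apply_one_zero {R : Type*} [NonUnitalRing R]
    (M N : Matrix (Fin 2) (Fin 2) R) : M 0 1 * N 1 0 = (M * N) 0 0 - M 0 0 * N 0 0 := by
  rw [Matrix.mul_apply, Fin.sum_univ_two, add_sub_cancel_left]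

namespace TwoSidedIdeal

variable {B : Type*} [NonUnitalCStarAlgebra B] {I : TwoSidedIdeal B} (hI : IsClosed (I : Set B))
  {M : Matrix (Fin 2) (Fin 2) B} {x : B}
include hI

lemma mul_apply_zero_one_mem (h : x * M 0 0 ∈ I) (h' : x * (M * star M) 0 0 ∈ I) :
    x * M 0 1 ∈ I := by
  apply mem_of_mul_star_self_mem hI
  have key : x * M 0 1 * star (x * M 0 1) =
      x * (M * star M) 0 0 * star x - x * M 0 0 * (star M 0 0 * star x) := by
    have := M.fin_two_apply_zero_one_mul_apply_one_zero (star M)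
    rw [Matrix.star_apply] at this
    rw [star_mul, ← mul_assoc, mul_assoc x, this]
    simp only [Matrix.star_apply]
    noncomm_ring
  rw [key]
  exact I.sub_mem (I.mul_mem_right _ _ h') (I.mul_mem_right _ _ h)

lemma apply_one_zero_mul_mem (h : M 0 0 * x ∈ I) (h' : (star M * M) 0 0 * x ∈ I) :
    M 1 0 * x ∈ I := by
  apply mem_of_star_mul_self_mem hI
  have key : star (M 1 0 * x) * (M 1 0 * x) =
      star x * ((star M * M) 0 0 * x) - star x * star M 0 0 * (M 0 0 * x) := by
    have := (star M).fin_two_apply_zero_one_mul_apply_one_zero M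
    rw [Matrix.star_apply] at this
    rw [star_mul, mul_assoc, ← mul_assoc (star (M 1 0)), this]
    simp only [Matrix.star_apply]
    noncomm_ring
  rw [key]
  exact I.sub_mem (I.mul_mem_left _ _ h') (I.mul_mem_left _ _ h)

end TwoSidedIdeal

/-- Let `A` and `B` be complex C*-algebras, `I ⊆ B` a closed two-sided ideal, and
`ψ : A → M₂(B)` a star-homomorphism with components `ψᵢⱼ`. Suppose `x ∈ B` satisfies
`x * ψ₁₁ a ∈ I` and `ψ₁₁ a * x ∈ I` for all `a ∈ A`. Then `x * ψ₁₂ a ∈ I` and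
`ψ₂₁ a * x ∈ I` for all `a ∈ A`. -/
theorem stmt_9 {A B : Type*} [NonUnitalCStarAlgebra A] [NonUnitalCStarAlgebra B]
    (I : TwoSidedIdeal B) (hI : IsClosed (I : Set B))
    (ψ : A →⋆ₙₐ[ℂ] Matrix (Fin 2) (Fin 2) B) (x : B)
    (hx : ∀ a : A, x * ψ a 0 0 ∈ I ∧ ψ a 0 0 * x ∈ I) :
    ∀ a : A, x * ψ a 0 1 ∈ I ∧ ψ a 1 0 * x ∈ I := by
  intro a
  refine ⟨I.mul_apply_zero_one_mem hI (hx a).1 ?_, I.apply_one_zero_mul_mem hI (hx a).2 ?_⟩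
  · simpa only [← map_star, ← map_mul] using (hx (a * star a)).1
  · simpa only [← map_star, ← map_mul] using (hx (star a * a)).2
end
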